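/- arXiv:1811.04690 — 5 statements merged into one kernel-verified Lean document; each statement's English description precedes it below -/
import Mathlib

section
/- If G = (S, 𝓕) is a local forest greedoid with rank function r and c : S → ℤ is a non-negative integer valued weight function, then the linear program min{ Σ_{s∈S} c(s)x(s) : x ∈ ℝ^S, x(U) ≥ r(S) − r(S \ U) for all U ⊆ S } and its dual max{ Σ_{U⊆S} y(U)(r(S) − r(S \ U)) : Σ{y(U) : s ∈ U} = c(s) for all s ∈ S, y(U) ≥ 0 for all U ⊆ S } both attain their optimum at integer vectors. -/
/-!
Run the greedy algorithm that, starting from `∅`, repeatedly attaches a continuation `y` of the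
current feasible set `A` whose path in `A ∪ {y}` is cheapest; let `q₁, …, q_r` be the costs paid
and `B` the resulting base. In a local forest greedoid a continuation that only appears once `t`
has been attached has the path of `t` plus itself as its path, so the costs are nondecreasing.

Since `r(B \ U)` counts the `b ∈ B` whose paths avoid `U`, the shadow vector
`sh_B(s) = #{b ∈ B : s ∈ path(b)}` is primal feasible, and its cost is `∑ q_i`. Putting weight
`q_{i+1} - q_i` on the set `Γ_i` of continuations at step `i` and the rest of `c(s)` on `{s}` gives
a dual solution: while `s` is a continuation its attachment cost is fixed and bounds the greedy
costs, so the weights on sets containing `s` add up to at most `c(s)`. As `r(S \ Γ_i) ≤ i`, the dual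
value is at least `∑ (q_{i+1} - q_i)(r - i) = ∑ q_i`, and weak duality makes both optimal.
-/

open Finset

variable {α : Type*} [DecidableEq α] [Fintype α]

/-- `X` is subfeasible: contained in some feasible set. -/
def Subfeasible (F : Set (Finset α)) (X : Finset α) : Prop :=
  ∃ Y ∈ F, X ⊆ Y

/-- Greedoid axioms: `∅` is feasible, and the exchange property. -/
def IsGreedoid (F : Set (Finset α)) : Prop :=
  (∅ : Finset α) ∈ F ∧
    ∀ X ∈ F, ∀ Y ∈ F, X.card < Y.card → ∃ y ∈ Y, y ∉ X ∧ insert y X ∈ F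

/-- Local union property. -/
def LocalUnion (F : Set (Finset α)) : Prop :=
  ∀ A ∈ F, ∀ B ∈ F, Subfeasible F (A ∪ B) → A ∪ B ∈ F

/-- Local intersection property. -/
def LocalInter (F : Set (Finset α)) : Prop :=
  ∀ A ∈ F, ∀ B ∈ F, Subfeasible F (A ∪ B) → A ∩ B ∈ F

/-- Local forest property. -/
def LocalForest (F : Set (Finset α)) : Prop :=
  ∀ A ∈ F, ∀ x y z : α,
    insert x A ∈ F → insert y A ∈ F → insert x (insert y A) ∈ F →
      insert z (insert x (insert y A)) ∈ F →
      insert z (insert x A) ∈ F ∨ insert z (insert y A) ∈ F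

/-- The rank function of a greedoid: max cardinality of a feasible subset. -/
noncomputable def grank (F : Set (Finset α)) (A : Finset α) : ℕ :=
  sSup {n : ℕ | ∃ X ∈ F, X ⊆ A ∧ X.card = n}

/-- A base: a feasible set of maximum size. -/
def IsBase (F : Set (Finset α)) (B : Finset α) : Prop :=
  B ∈ F ∧ ∀ C ∈ F, C.card ≤ B.card

/-- The set of continuations of a feasible set `A`. -/
def Gamma (F : Set (Finset α)) (A : Finset α) : Set α :=
  {x | x ∉ A ∧ insert x A ∈ F}

/-- `P` is the `x`-path in `A`: the unique inclusion-minimal feasible subset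
of `A` containing `x`. -/
def IsPathIn (F : Set (Finset α)) (A : Finset α) (x : α) (P : Finset α) : Prop :=
  P ∈ F ∧ P ⊆ A ∧ x ∈ P ∧ ∀ Q ∈ F, Q ⊆ A → x ∈ Q → P ⊆ Q

/-- `P` is a path. -/
def IsPath (F : Set (Finset α)) (P : Finset α) : Prop :=
  ∃ A ∈ F, ∃ x ∈ A, IsPathIn F A x P

/-- `l` is a feasible ordering (of the set of its elements): every prefix is feasible. -/
def FeasibleOrdering (F : Set (Finset α)) (l : List α) : Prop :=
  l.Nodup ∧ ∀ i : ℕ, (l.take i).toFinset ∈ F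

/-- `B` is a greedy base for maximizing `w`. -/
def GreedyMaxBase (F : Set (Finset α)) (w : Finset α → ℝ) (B : Finset α) : Prop :=
  IsBase F B ∧ ∃ l : List α, FeasibleOrdering F l ∧ l.toFinset = B ∧
    ∀ (i : ℕ) (hi : i < l.length), ∀ y ∈ Gamma F (l.take i).toFinset,
      w (insert y (l.take i).toFinset) ≤ w (insert (l.get ⟨i, hi⟩) (l.take i).toFinset)

/-- `B` is a greedy base for minimizing `w`. -/
def GreedyMinBase (F : Set (Finset α)) (w : Finset α → ℝ) (B : Finset α) : Prop :=
  IsBase F B ∧ ∃ l : List α, FeasibleOrdering F l ∧ l.toFinset = B ∧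
    ∀ (i : ℕ) (hi : i < l.length), ∀ y ∈ Gamma F (l.take i).toFinset,
      w (insert (l.get ⟨i, hi⟩) (l.take i).toFinset) ≤ w (insert y (l.take i).toFinset)

/-- The shadow vector of a feasible set `B`: `sh_B(x) = |B| - r(B \ {x})`. -/
noncomputable def shVec (F : Set (Finset α)) (B : Finset α) : α → ℝ :=
  fun x => (B.card : ℝ) - (grank F (B.erase x) : ℝ)

section Rank

omit [DecidableEq α] [Fintype α]

variable {F : Set (Finset α)} {A B X : Finset α}

lemma bddAbove_card_feasible_subset (F : Set (Finset α)) (A : Finset α) :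
    BddAbove {n : ℕ | ∃ X ∈ F, X ⊆ A ∧ X.card = n} :=
  ⟨A.card, by rintro _ ⟨X, -, hXA, rfl⟩; exact card_le_card hXA⟩

lemma card_le_grank (hX : X ∈ F) (hXA : X ⊆ A) : X.card ≤ grank F A :=
  le_csSup (bddAbove_card_feasible_subset F A) ⟨X, hX, hXA, rfl⟩

lemma grank_le_of_forall {m : ℕ} (h : ∀ X ∈ F, X ⊆ A → X.card ≤ m) : grank F A ≤ m :=
  csSup_le' (by rintro _ ⟨X, hX, hXA, rfl⟩; exact h X hX hXA)

lemma grank_mono (hAB : A ⊆ B) : grank F A ≤ grank F B :=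
  csSup_le_csSup' (bddAbove_card_feasible_subset F B)
    (by rintro _ ⟨X, hX, hXA, rfl⟩; exact ⟨X, hX, hXA.trans hAB, rfl⟩)

end Rank

omit [DecidableEq α] in
lemma IsBase.grank_univ {F : Set (Finset α)} {B : Finset α} (hB : IsBase F B) :
    grank F univ = B.card :=
  le_antisymm (grank_le_of_forall fun C hC _ => hB.2 C hC) (card_le_grank hB.1 (subset_univ B))

section LinearProgram

variable {F : Set (Finset α)}

def PrimalFeasible (F : Set (Finset α)) (x : α → ℝ) : Prop :=
  ∀ U : Finset α, (grank F univ : ℝ) - (grank F (univ \ U) : ℝ) ≤ ∑ s ∈ U, x s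

def DualFeasible (c : α → ℤ) (y : Finset α → ℝ) : Prop :=
  (∀ U, 0 ≤ y U) ∧ ∀ s : α, ∑ U ∈ univ.powerset.filter (fun U => s ∈ U), y U = (c s : ℝ)

noncomputable def dualObjective (F : Set (Finset α)) (y : Finset α → ℝ) : ℝ :=
  ∑ U ∈ univ.powerset, y U * ((grank F univ : ℝ) - (grank F (univ \ U) : ℝ))

lemma dualObjective_le {c : α → ℤ} {x : α → ℝ} {y : Finset α → ℝ} (hx : PrimalFeasible F x)
    (hy : DualFeasible c y) : dualObjective F y ≤ ∑ s, (c s : ℝ) * x s :=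
  calc dualObjective F y ≤ ∑ U ∈ univ.powerset, y U * ∑ s ∈ U, x s :=
        sum_le_sum fun U _ => mul_le_mul_of_nonneg_left (hx U) (hy.1 U)
    _ = ∑ s, (c s : ℝ) * x s := by
        simp_rw [← hy.2, sum_mul, mul_sum, sum_filter]
        rw [sum_comm]
        refine sum_congr rfl fun U _ => ?_
        rw [← sum_filter, filter_mem_eq_inter, univ_inter]

end LinearProgram

lemma sum_mul_card_filter_mem {β R : Type*} [NonAssocSemiring R] (w : α → R) (B : Finset β)
    (P : β → Finset α) :
    ∑ t, w t * (B.filter fun y => t ∈ P y).card = ∑ y ∈ B, ∑ t ∈ P y, w t := by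
  simp_rw [card_filter, Nat.cast_sum, mul_sum, Nat.cast_ite, Nat.cast_one, Nat.cast_zero,
    mul_ite, mul_one, mul_zero]
  rw [sum_comm]
  refine sum_congr rfl fun y _ => ?_
  rw [sum_ite_mem, univ_inter]

lemma sum_range_sub_mul_sub {R : Type*} [CommRing R] (f : ℕ → R) (hf : f 0 = 0) (n : ℕ) :
    ∑ i ∈ range n, (f (i + 1) - f i) * ((n : R) - i) = ∑ i ∈ range n, f (i + 1) := by
  induction n with
  | zero => simp
  | succ n ih =>
    have hsplit : ∑ i ∈ range (n + 1), (f (i + 1) - f i) * (((n + 1 : ℕ) : R) - i) =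
        ∑ i ∈ range (n + 1), (f (i + 1) - f i) * ((n : R) - i) +
          ∑ i ∈ range (n + 1), (f (i + 1) - f i) := by
      rw [← sum_add_distrib]
      refine sum_congr rfl fun i _ => ?_
      push_cast
      ring
    rw [hsplit, sum_range_sub, hf, sum_range_succ _ n, ih, sum_range_succ (fun i => f (i + 1))]
    ring

lemma sum_filter_mem_pi_single {M : Type*} [AddCommMonoid M] (V : Finset α) (m : M) (t : α) :
    ∑ U ∈ univ.powerset with t ∈ U, Pi.single V m U = if t ∈ V then m else 0 := by
  rw [sum_pi_single']
  simp

lemma sum_pi_single_mul {R : Type*} [NonUnitalNonAssocSemiring R] (V : Finset α) (m : R)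
    (g : Finset α → R) : ∑ U ∈ univ.powerset, (Pi.single V m : Finset α → R) U * g U = m * g V := by
  simp [Pi.single_apply, ite_mul]

section Paths

omit [Fintype α]

variable {F : Set (Finset α)} {A' P Q X Y : Finset α} {s t x y : α}

lemma IsGreedoid.exists_mem_between (hG : IsGreedoid F) (hX : X ∈ F) (hY : Y ∈ F)
    (hXY : X ⊆ Y) {k : ℕ} (hXk : X.card ≤ k) (hkY : k ≤ Y.card) :
    ∃ Z ∈ F, X ⊆ Z ∧ Z ⊆ Y ∧ Z.card = k := by
  induction k, hXk using Nat.le_induction with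
  | base => exact ⟨X, hX, subset_rfl, hXY, rfl⟩
  | succ k _ ih =>
    obtain ⟨Z, hZ, hXZ, hZY, rfl⟩ := ih (by omega)
    obtain ⟨y, hyY, hyZ, hyZF⟩ := hG.2 Z hZ Y hY (by omega)
    exact ⟨insert y Z, hyZF, hXZ.trans (subset_insert y Z), insert_subset hyY hZY,
      card_insert_of_notMem hyZ⟩

lemma IsGreedoid.exists_erase_mem (hG : IsGreedoid F) (hX : X ∈ F) (hY : Y ∈ F) (hXY : X ⊂ Y) :
    ∃ w ∈ Y, w ∉ X ∧ Y.erase w ∈ F := by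
  have hcard := card_lt_card hXY
  obtain ⟨Z, hZ, hXZ, hZY, hZcard⟩ :=
    hG.exists_mem_between hX hY hXY.subset (k := Y.card - 1) (by omega) (by omega)
  obtain ⟨w, hwY, hwZ⟩ := exists_of_ssubset
    (ssubset_of_subset_of_ne hZY fun hZY => by rw [hZY] at hZcard; omega)
  have hZw : Z = Y.erase w :=
    eq_of_subset_of_card_le (fun z hz => mem_erase.2 ⟨ne_of_mem_of_not_mem hz hwZ, hZY hz⟩)
      (by rw [card_erase_of_mem hwY]; omega)
  exact ⟨w, hwY, fun hwX => hwZ (hXZ hwX), hZw ▸ hZ⟩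

lemma exists_isPathIn (hI : LocalInter F) (hX : X ∈ F) (hx : x ∈ X) : ∃ P, IsPathIn F X x P := by
  classical
  let D := X.powerset.filter fun Q => Q ∈ F ∧ x ∈ Q
  obtain ⟨P, hPD, hPmin⟩ := D.exists_min_image card ⟨X, by simp [D, hX, hx]⟩
  simp only [D, mem_filter, mem_powerset] at hPD hPmin
  refine ⟨P, hPD.2.1, hPD.1, hPD.2.2, fun Q hQ hQX hxQ => ?_⟩
  have hPQ : P ∩ Q ∈ F := hI P hPD.2.1 Q hQ ⟨X, hX, union_subset hPD.1 hQX⟩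
  have : P ∩ Q = P := eq_of_subset_of_card_le inter_subset_left
    (hPmin _ ⟨inter_subset_left.trans hPD.1, hPQ, mem_inter.2 ⟨hPD.2.2, hxQ⟩⟩)
  exact this ▸ inter_subset_right

omit [DecidableEq α] in
lemma IsPathIn.unique (hP : IsPathIn F X x P) (hQ : IsPathIn F X x Q) : P = Q :=
  Subset.antisymm (hP.2.2.2 Q hQ.1 hQ.2.1 hQ.2.2.1) (hQ.2.2.2 P hP.1 hP.2.1 hP.2.2.1)

/-- A junk value unless some `x`-path in `X` exists, e.g. when `X` is feasible and `x ∈ X`. -/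
noncomputable def pathIn (F : Set (Finset α)) (X : Finset α) (x : α) : Finset α :=
  Classical.epsilon (IsPathIn F X x)

omit [DecidableEq α] in
lemma IsPathIn.pathIn_eq (hP : IsPathIn F X x P) : pathIn F X x = P :=
  (Classical.epsilon_spec ⟨P, hP⟩ : IsPathIn F X x (pathIn F X x)).unique hP

lemma isPathIn_pathIn (hI : LocalInter F) (hX : X ∈ F) (hx : x ∈ X) :
    IsPathIn F X x (pathIn F X x) := by
  obtain ⟨P, hP⟩ := exists_isPathIn hI hX hx
  exact hP.pathIn_eq ▸ hP

lemma IsPathIn.mono (hI : LocalInter F) (hP : IsPathIn F X x P) (hY : Y ∈ F) (hXY : X ⊆ Y) :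
    IsPathIn F Y x P := by
  refine ⟨hP.1, hP.2.1.trans hXY, hP.2.2.1, fun Q hQ hQY hxQ => ?_⟩
  have hPQ : P ∩ Q ∈ F := hI P hP.1 Q hQ ⟨Y, hY, union_subset (hP.2.1.trans hXY) hQY⟩
  exact (hP.2.2.2 _ hPQ (inter_subset_left.trans hP.2.1) (mem_inter.2 ⟨hP.2.2.1, hxQ⟩)).trans
    inter_subset_right

lemma pathIn_eq_of_subset (hI : LocalInter F) (hX : X ∈ F) (hY : Y ∈ F) (hXY : X ⊆ Y)
    (hx : x ∈ X) : pathIn F Y x = pathIn F X x :=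
  ((isPathIn_pathIn hI hX hx).mono hI hY hXY).pathIn_eq

lemma pathIn_subset_pathIn (hI : LocalInter F) (hX : X ∈ F) (hx : x ∈ X)
    (hy : y ∈ pathIn F X x) : pathIn F X y ⊆ pathIn F X x := by
  have hP := isPathIn_pathIn hI hX hx
  rw [pathIn_eq_of_subset hI hP.1 hX hP.2.1 hy]
  exact (isPathIn_pathIn hI hP.1 hy).2.1

lemma IsPathIn.eq_of_erase_mem {w : α} (hP : IsPathIn F X x P) (hw : w ∈ P)
    (hwF : P.erase w ∈ F) : w = x := by
  by_contra hwx
  exact notMem_erase w P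
    (hP.2.2.2 _ hwF ((erase_subset w P).trans hP.2.1) (mem_erase.2 ⟨Ne.symm hwx, hP.2.2.1⟩) hw)

lemma IsPathIn.erase_mem (hG : IsGreedoid F) (hP : IsPathIn F X x P) : P.erase x ∈ F := by
  obtain ⟨w, hwP, -, hwF⟩ := hG.exists_erase_mem hG.1 hP.1 (empty_ssubset.2 ⟨x, hP.2.2.1⟩)
  rwa [← hP.eq_of_erase_mem hwP hwF]

lemma isPathIn_self (hG : IsGreedoid F) (hI : LocalInter F) (hQ : Q ∈ F) (hx : x ∈ Q)
    (huniq : ∀ w ∈ Q, Q.erase w ∈ F → w = x) : IsPathIn F Q x Q := by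
  have hD := isPathIn_pathIn hI hQ hx
  suffices pathIn F Q x = Q by rwa [this] at hD
  by_contra hne
  obtain ⟨w, hwQ, hwD, hwF⟩ := hG.exists_erase_mem hD.1 hQ (ssubset_of_subset_of_ne hD.2.1 hne)
  exact hwD (huniq w hwQ hwF ▸ hD.2.2.1)

lemma IsPathIn.mem_of_insert_notMem (hU : LocalUnion F) (hA' : A' ∈ F)
    (hX : insert s (insert t A') ∈ F) (hP : IsPathIn F (insert s (insert t A')) s P)
    (hs' : insert s A' ∉ F) : t ∈ P := by
  by_contra htP
  have hPs : P ⊆ insert s A' := fun a ha => by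
    have := hP.2.1 ha
    simp only [mem_insert] at this ⊢
    grind
  have hunion : A' ∪ P = insert s A' := Subset.antisymm (union_subset (subset_insert s A') hPs)
    (insert_subset (mem_union_right _ hP.2.2.1) subset_union_left)
  exact hs' (hunion ▸ hU A' hA' P hP.1
    ⟨_, hX, union_subset ((subset_insert t A').trans (subset_insert s _)) hP.2.1⟩)

lemma IsPathIn.eq_of_erase_erase_mem (hI : LocalInter F) (hLF : LocalForest F)
    (hP : IsPathIn F X s P) (hQ : P.erase s ∈ F) (hx : x ∈ P.erase s) (hy : y ∈ P.erase s)
    (hxF : (P.erase s).erase x ∈ F) (hyF : (P.erase s).erase y ∈ F) : x = y := by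
  set Q := P.erase s
  by_contra hxy
  set A₀ := (Q.erase x).erase y
  have hA₀ : A₀ ∈ F := by
    have hQP : Q ⊆ P := erase_subset s P
    have := hI _ hxF _ hyF
      ⟨P, hP.1, union_subset ((erase_subset x Q).trans hQP) ((erase_subset y Q).trans hQP)⟩
    convert this using 1
    ext a
    simp only [A₀, mem_erase, mem_inter]
    tauto
  have hxA₀ : insert x A₀ = Q.erase y := by
    ext a; simp only [A₀, mem_insert, mem_erase]; grind
  have hyA₀ : insert y A₀ = Q.erase x := by
    ext a; simp only [A₀, mem_insert, mem_erase]; grind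
  have hxyA₀ : insert x (insert y A₀) = Q := by
    rw [hyA₀, insert_erase hx]
  have hsQ : insert s Q = P := insert_erase hP.2.2.1
  have hsmall : ∀ z ∈ Q, insert s (Q.erase z) ∉ F := fun z hz hzF => by
    have hPz : insert s (Q.erase z) = P.erase z := by
      ext a; simp only [Q, mem_insert, mem_erase] at hz ⊢; grind [hP.2.2.1]
    exact ne_of_mem_erase hz (hP.eq_of_erase_mem (mem_of_mem_erase hz) (hPz ▸ hzF))
  rcases hLF A₀ hA₀ x y s (hxA₀ ▸ hyF) (hyA₀ ▸ hxF) (hxyA₀ ▸ hQ)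
    (by rw [hxyA₀, hsQ]; exact hP.1) with h | h
  · exact hsmall y hy (hxA₀ ▸ h)
  · exact hsmall x hx (hyA₀ ▸ h)

/-- `P \ {s}` is feasible, contains `t` by the local union property, and has a unique removable
element by the local forest property; so it is a path, and it can only be the path of `t`. -/
theorem pathIn_insert_eq_insert_pathIn (hG : IsGreedoid F) (hU : LocalUnion F)
    (hI : LocalInter F) (hLF : LocalForest F) (hA' : A' ∈ F) (hA : insert t A' ∈ F)
    (ht : t ∉ A') (hs : s ∉ insert t A') (hX : insert s (insert t A') ∈ F)
    (hs' : insert s A' ∉ F) :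
    pathIn F (insert s (insert t A')) s = insert s (pathIn F (insert t A') t) := by
  have hP := isPathIn_pathIn hI hX (mem_insert_self _ _)
  set P := pathIn F (insert s (insert t A')) s
  set Q := P.erase s
  have hQ : Q ∈ F := hP.erase_mem hG
  have hQA : Q ⊆ insert t A' := fun a ha =>
    (mem_insert.1 (hP.2.1 (mem_of_mem_erase ha))).resolve_left (ne_of_mem_erase ha)
  have htQ : t ∈ Q :=
    mem_erase.2 ⟨fun hts => hs (hts ▸ mem_insert_self t A'), hP.mem_of_insert_notMem hU hA' hX hs'⟩
  obtain ⟨x₀, hx₀Q, -, hx₀F⟩ := hG.exists_erase_mem hG.1 hQ (empty_ssubset.2 ⟨t, htQ⟩)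
  have hQpath : IsPathIn F (insert t A') x₀ Q :=
    (isPathIn_self hG hI hQ hx₀Q fun w hw hwF =>
      hP.eq_of_erase_erase_mem hI hLF hQ hw hx₀Q hwF hx₀F).mono hI hA hQA
  have hx₀t : x₀ = t := by
    by_contra hne
    have hx₀A' : x₀ ∈ A' := (mem_insert.1 (hQA hx₀Q)).resolve_left hne
    have hP' := isPathIn_pathIn hI hA' hx₀A'
    have hQP' : Q = pathIn F A' x₀ := hQpath.unique (hP'.mono hI hA (subset_insert t A'))
    exact ht (hP'.2.1 (hQP' ▸ htQ))
  have hpath := hQpath.pathIn_eq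
  rw [hx₀t] at hpath
  rw [hpath, insert_erase hP.2.2.1]

end Paths

section PathClosed

omit [Fintype α]

variable {F : Set (Finset α)} {B C : Finset α}

lemma LocalUnion.biUnion_mem {ι : Type*} [DecidableEq ι] (hU : LocalUnion F) (h0 : ∅ ∈ F)
    (hC : C ∈ F) (T : Finset ι) {P : ι → Finset α} (hP : ∀ i ∈ T, P i ∈ F ∧ P i ⊆ C) :
    T.biUnion P ∈ F := by
  induction T using Finset.induction_on with
  | empty => simpa using h0
  | insert i T _ ih =>
    have hTC : T.biUnion P ⊆ C := biUnion_subset.2 fun j hj => (hP j (mem_insert_of_mem hj)).2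
    obtain ⟨hPF, hPC⟩ := hP i (mem_insert_self i T)
    rw [biUnion_insert]
    exact hU _ hPF _ (ih fun j hj => hP j (mem_insert_of_mem hj)) ⟨C, hC, union_subset hPC hTC⟩

lemma filter_disjoint_pathIn_mem (h0 : ∅ ∈ F) (hU : LocalUnion F) (hI : LocalInter F)
    (hB : B ∈ F) (U : Finset α) : B.filter (fun y => Disjoint (pathIn F B y) U) ∈ F := by
  set W := B.filter (fun y => Disjoint (pathIn F B y) U)
  have hW : W.biUnion (pathIn F B) = W := by
    ext z
    simp only [W, mem_biUnion, mem_filter]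
    constructor
    · rintro ⟨y, ⟨hyB, hyU⟩, hz⟩
      exact ⟨(isPathIn_pathIn hI hB hyB).2.1 hz,
        disjoint_of_subset_left (pathIn_subset_pathIn hI hB hyB hz) hyU⟩
    · exact fun hz => ⟨z, hz, (isPathIn_pathIn hI hB hz.1).2.2.1⟩
  rw [← hW]
  exact hU.biUnion_mem h0 hB W fun y hy =>
    ⟨(isPathIn_pathIn hI hB (mem_filter.1 hy).1).1, (isPathIn_pathIn hI hB (mem_filter.1 hy).1).2.1⟩

lemma grank_sdiff_eq_card_filter (h0 : ∅ ∈ F) (hU : LocalUnion F) (hI : LocalInter F)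
    (hB : B ∈ F) (U : Finset α) :
    grank F (B \ U) = (B.filter fun y => Disjoint (pathIn F B y) U).card := by
  apply le_antisymm
  · refine grank_le_of_forall fun X hX hXBU => card_le_card fun y hy => ?_
    have hpath : pathIn F B y = pathIn F X y :=
      pathIn_eq_of_subset hI hX hB (hXBU.trans sdiff_subset) hy
    refine mem_filter.2 ⟨(mem_sdiff.1 (hXBU hy)).1, hpath ▸ disjoint_left.2 fun u hu huU => ?_⟩
    exact (mem_sdiff.1 (hXBU ((isPathIn_pathIn hI hX hy).2.1 hu))).2 huU
  · refine card_le_grank (filter_disjoint_pathIn_mem h0 hU hI hB U) fun y hy => ?_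
    rw [mem_filter] at hy
    exact mem_sdiff.2 ⟨hy.1, disjoint_left.1 hy.2 (isPathIn_pathIn hI hB hy.1).2.2.1⟩

lemma shVec_eq_card_filter (h0 : ∅ ∈ F) (hU : LocalUnion F) (hI : LocalInter F) (hB : B ∈ F)
    (t : α) : shVec F B t = (B.filter fun y => t ∈ pathIn F B y).card := by
  have hrank := grank_sdiff_eq_card_filter h0 hU hI hB {t}
  simp only [disjoint_singleton_right, sdiff_singleton_eq_erase] at hrank
  rw [shVec, hrank, ← card_filter_add_card_filter_not (s := B) (fun y => t ∈ pathIn F B y)]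
  push_cast
  ring

end PathClosed

lemma primalFeasible_shVec {F : Set (Finset α)} {B : Finset α} (h0 : ∅ ∈ F) (hU : LocalUnion F)
    (hI : LocalInter F) (hB : IsBase F B) : PrimalFeasible F (shVec F B) := by
  intro U
  have hcount : B.card ≤ grank F (B \ U) + ∑ t ∈ U, (B.filter fun y => t ∈ pathIn F B y).card := by
    rw [grank_sdiff_eq_card_filter h0 hU hI hB.1,
      ← card_filter_add_card_filter_not (s := B) (fun y => Disjoint (pathIn F B y) U)]
    gcongr
    calc (B.filter fun y => ¬Disjoint (pathIn F B y) U).card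
        ≤ (U.biUnion fun t => B.filter fun y => t ∈ pathIn F B y).card := by
          refine card_le_card fun y hy => ?_
          obtain ⟨hyB, hyU⟩ := mem_filter.1 hy
          obtain ⟨t, htP, htU⟩ := not_disjoint_iff.1 hyU
          exact mem_biUnion.2 ⟨t, htU, mem_filter.2 ⟨hyB, htP⟩⟩
      _ ≤ _ := card_biUnion_le
  have hmono := grank_mono (F := F) (sdiff_subset_sdiff (subset_univ B) (subset_refl U))
  simp_rw [shVec_eq_card_filter h0 hU hI hB.1, hB.grank_univ]
  rw [sub_le_iff_le_add']
  exact_mod_cast hcount.trans (Nat.add_le_add_right hmono _)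

section Continuations

variable {F : Set (Finset α)} {A : Finset α} {y : α}

omit [Fintype α] in
lemma IsGreedoid.exists_mem_gamma (hG : IsGreedoid F) (hA : A ∈ F) {C : Finset α} (hC : C ∈ F)
    (hAC : A.card < C.card) : ∃ y ∈ C, y ∈ Gamma F A :=
  let ⟨y, hyC, hyA, hyF⟩ := hG.2 A hA C hC hAC
  ⟨y, hyC, hyA, hyF⟩

omit [Fintype α] in
lemma IsGreedoid.isBase_of_gamma_eq_empty (hG : IsGreedoid F) (hA : A ∈ F)
    (hΓ : Gamma F A = ∅) : IsBase F A :=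
  ⟨hA, fun _ hC => not_lt.1 fun hlt =>
    let ⟨y, _, hy⟩ := hG.exists_mem_gamma hA hC hlt
    (hΓ ▸ hy : y ∈ (∅ : Set α))⟩

open Classical in
noncomputable def gammaFinset (F : Set (Finset α)) (A : Finset α) : Finset α :=
  univ.filter (· ∈ Gamma F A)

lemma mem_gammaFinset : y ∈ gammaFinset F A ↔ y ∈ Gamma F A := by
  simp [gammaFinset]

lemma IsGreedoid.grank_compl_gammaFinset_le (hG : IsGreedoid F) (hA : A ∈ F) :
    grank F (univ \ gammaFinset F A) ≤ A.card :=
  grank_le_of_forall fun _ hC hCΓ => not_lt.1 fun hlt =>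
    let ⟨_, hyC, hy⟩ := hG.exists_mem_gamma hA hC hlt
    (mem_sdiff.1 (hCΓ hyC)).2 (mem_gammaFinset.2 hy)

end Continuations

section GreedyRun

omit [Fintype α]

variable {F : Set (Finset α)} {c : α → ℤ} {s : ℕ → α} {r i j : ℕ} {A' X Y : Finset α} {t y : α}

noncomputable def attachCost (F : Set (Finset α)) (c : α → ℤ) (X : Finset α) (y : α) : ℤ :=
  ∑ z ∈ pathIn F (insert y X) y, c z

lemma attachCost_eq_of_subset (hI : LocalInter F) (hX : insert y X ∈ F) (hY : insert y Y ∈ F)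
    (hXY : X ⊆ Y) : attachCost F c Y y = attachCost F c X y := by
  rw [attachCost, attachCost,
    pathIn_eq_of_subset hI hX hY (insert_subset_insert y hXY) (mem_insert_self y X)]

lemma attachCost_empty (hy : {y} ∈ F) : attachCost F c ∅ y = c y := by
  have hpath : IsPathIn F {y} y {y} :=
    ⟨hy, subset_rfl, mem_singleton_self y, fun Q _ _ hyQ => singleton_subset_iff.2 hyQ⟩
  rw [attachCost, insert_empty, hpath.pathIn_eq, sum_singleton]

lemma attachCost_insert (hG : IsGreedoid F) (hU : LocalUnion F) (hI : LocalInter F)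
    (hLF : LocalForest F) (hA' : A' ∈ F) (hA : insert t A' ∈ F) (ht : t ∉ A')
    (hy : y ∉ insert t A') (hX : insert y (insert t A') ∈ F) (hy' : insert y A' ∉ F) :
    attachCost F c (insert t A') y = c y + attachCost F c A' t := by
  have hyP : y ∉ pathIn F (insert t A') t :=
    fun h => hy ((isPathIn_pathIn hI hA (mem_insert_self t A')).2.1 h)
  rw [attachCost, attachCost, pathIn_insert_eq_insert_pathIn hG hU hI hLF hA' hA ht hy hX hy',
    sum_insert hyP]

omit [DecidableEq α] in
def prefixSet (s : ℕ → α) (i : ℕ) : Finset α := (range i).image s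

lemma prefixSet_zero : prefixSet s 0 = ∅ := by
  simp [prefixSet]

lemma prefixSet_succ : prefixSet s (i + 1) = insert (s i) (prefixSet s i) := by
  rw [prefixSet, range_add_one, image_insert, prefixSet]

lemma prefixSet_mono (hij : i ≤ j) : prefixSet s i ⊆ prefixSet s j :=
  image_subset_image (range_subset_range.2 hij)

structure IsGreedyPrefix (F : Set (Finset α)) (c : α → ℤ) (s : ℕ → α) (r : ℕ) : Prop where
  mem_gamma : ∀ i < r, s i ∈ Gamma F (prefixSet s i)
  attachCost_le : ∀ i < r, ∀ y ∈ Gamma F (prefixSet s i),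
    attachCost F c (prefixSet s i) (s i) ≤ attachCost F c (prefixSet s i) y

structure IsGreedyRun (F : Set (Finset α)) (c : α → ℤ) (s : ℕ → α) (r : ℕ) : Prop
    extends IsGreedyPrefix F c s r where
  gamma_eq_empty : Gamma F (prefixSet s r) = ∅

namespace IsGreedyPrefix

lemma prefixSet_mem (R : IsGreedyPrefix F c s r) (h0 : ∅ ∈ F) : ∀ i ≤ r, prefixSet s i ∈ F
  | 0, _ => prefixSet_zero (s := s) ▸ h0
  | i + 1, hi => prefixSet_succ (s := s) ▸ (R.mem_gamma i hi).2

lemma card_prefixSet (R : IsGreedyPrefix F c s r) : ∀ i ≤ r, (prefixSet s i).card = i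
  | 0, _ => by rw [prefixSet_zero, card_empty]
  | i + 1, hi => by
    rw [prefixSet_succ, card_insert_of_notMem (R.mem_gamma i hi).1, R.card_prefixSet i (by omega)]

end IsGreedyPrefix

end GreedyRun

section GreedyAlgorithm

variable {F : Set (Finset α)} {c : α → ℤ} {s : ℕ → α} {r : ℕ}

lemma IsGreedyPrefix.exists_succ (R : IsGreedyPrefix F c s r)
    (hΓ : (Gamma F (prefixSet s r)).Nonempty) :
    ∃ s', IsGreedyPrefix F c s' (r + 1) := by
  obtain ⟨y₀, hy₀⟩ := hΓ
  obtain ⟨w, hw, hwmin⟩ := (gammaFinset F (prefixSet s r)).exists_min_image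
    (attachCost F c (prefixSet s r)) ⟨y₀, mem_gammaFinset.2 hy₀⟩
  have hpre : ∀ i ≤ r, prefixSet (Function.update s r w) i = prefixSet s i := fun i hi =>
    image_congr fun j hj => Function.update_of_ne (by simp at hj; omega) _ _
  refine ⟨Function.update s r w, fun i hi => ?_, fun i hi => ?_⟩ <;>
    rw [hpre i (by omega)] <;> rcases Nat.lt_succ_iff_lt_or_eq.1 hi with hi | rfl
  · rw [Function.update_of_ne (by omega)]
    exact R.mem_gamma i hi
  · rw [Function.update_self]
    exact mem_gammaFinset.1 hw
  · rw [Function.update_of_ne (by omega)]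
    exact R.attachCost_le i hi
  · rw [Function.update_self]
    exact fun y hy => hwmin y (mem_gammaFinset.2 hy)

lemma exists_isGreedyRun [Nonempty α] (c : α → ℤ) : ∃ s r, IsGreedyRun F c s r := by
  classical
  let P r := ∃ s, IsGreedyPrefix F c s r
  have hP0 : P 0 := ⟨fun _ => Classical.arbitrary α, fun _ h => absurd h (Nat.not_lt_zero _),
    fun _ h => absurd h (Nat.not_lt_zero _)⟩
  have hbound : ∀ r, P r → r ≤ Fintype.card α := fun r ⟨s, R⟩ =>
    R.card_prefixSet r le_rfl ▸ card_le_univ _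
  obtain ⟨s, R⟩ := Nat.findGreatest_spec (P := P) (Nat.zero_le (Fintype.card α)) hP0
  refine ⟨s, _, R, Set.not_nonempty_iff_eq_empty.1 fun hΓ => ?_⟩
  obtain ⟨s', R'⟩ := R.exists_succ hΓ
  exact Nat.findGreatest_is_greatest (Nat.lt_succ_self _) (hbound _ ⟨s', R'⟩) ⟨s', R'⟩

end GreedyAlgorithm

section RunValue

variable {F : Set (Finset α)} {c : α → ℤ} {s : ℕ → α} {r i : ℕ} {t y : α}

noncomputable def runValue (F : Set (Finset α)) (c : α → ℤ) (s : ℕ → α) : ℕ → ℤ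
  | 0 => 0
  | i + 1 => attachCost F c (prefixSet s i) (s i)

noncomputable def runGain (F : Set (Finset α)) (c : α → ℤ) (s : ℕ → α) (i : ℕ) : ℤ :=
  runValue F c s (i + 1) - runValue F c s i

namespace IsGreedyPrefix

variable (hG : IsGreedoid F) (hU : LocalUnion F) (hI : LocalInter F) (hLF : LocalForest F)
include hG hU hI hLF

omit [Fintype α] in
lemma attachCost_succ_of_notMem_gamma (R : IsGreedyPrefix F c s r) (hi : i < r)
    (hy : y ∈ Gamma F (prefixSet s (i + 1))) (hy' : y ∉ Gamma F (prefixSet s i)) :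
    attachCost F c (prefixSet s (i + 1)) y = c y + runValue F c s (i + 1) := by
  rw [prefixSet_succ] at hy ⊢
  have hyA : y ∉ prefixSet s i := fun h => hy.1 (mem_insert_of_mem h)
  exact attachCost_insert hG hU hI hLF (R.prefixSet_mem hG.1 i hi.le) (R.mem_gamma i hi).2
    (R.mem_gamma i hi).1 hy.1 hy.2 fun h => hy' ⟨hyA, h⟩

omit [Fintype α] in
lemma runGain_nonneg (hc : ∀ t, 0 ≤ c t) (R : IsGreedyPrefix F c s r) (hi : i < r) :
    0 ≤ runGain F c s i := by
  rw [runGain, sub_nonneg]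
  cases i with
  | zero => exact sum_nonneg fun z _ => hc z
  | succ j =>
    have hy := R.mem_gamma (j + 1) hi
    change runValue F c s (j + 1) ≤ attachCost F c (prefixSet s (j + 1)) (s (j + 1))
    by_cases hy' : s (j + 1) ∈ Gamma F (prefixSet s j)
    · rw [attachCost_eq_of_subset hI hy'.2 hy.2 (prefixSet_mono j.le_succ)]
      exact R.attachCost_le j (by omega) _ hy'
    · rw [R.attachCost_succ_of_notMem_gamma hG hU hI hLF (by omega) hy hy']
      linarith [hc (s (j + 1))]

omit [Fintype α] in
lemma attachCost_eq_of_forall_notMem_gamma (R : IsGreedyPrefix F c s r) (hi : i < r)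
    (ht : t ∈ Gamma F (prefixSet s i)) (hfirst : ∀ j < i, t ∉ Gamma F (prefixSet s j)) :
    attachCost F c (prefixSet s i) t = c t + runValue F c s i := by
  cases i with
  | zero =>
    rw [prefixSet_zero] at ht ⊢
    rw [attachCost_empty (by simpa using ht.2), runValue, add_zero]
  | succ j =>
    exact R.attachCost_succ_of_notMem_gamma hG hU hI hLF (by omega) ht (hfirst j j.lt_succ_self)

lemma sum_runGain_le (hc : ∀ t, 0 ≤ c t) (R : IsGreedyPrefix F c s r) (t : α) :
    ∑ i ∈ range r with t ∈ gammaFinset F (prefixSet s i), runGain F c s i ≤ c t := by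
  set I := (range r).filter fun i => t ∈ gammaFinset F (prefixSet s i)
  rcases I.eq_empty_or_nonempty with hI0 | hIne
  · rw [hI0, sum_empty]
    exact hc t
  have hmem : ∀ i ∈ I, i < r ∧ t ∈ Gamma F (prefixSet s i) := fun i hi => by
    simpa [I, mem_gammaFinset] using hi
  obtain ⟨har, ha⟩ := hmem _ (I.min'_mem hIne)
  obtain ⟨hbr, hb⟩ := hmem _ (I.max'_mem hIne)
  have hab : I.min' hIne ≤ I.max' hIne := I.min'_le _ (I.max'_mem hIne)
  have hfirst : ∀ j < I.min' hIne, t ∉ Gamma F (prefixSet s j) := fun j hj ht =>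
    (I.min'_le j (mem_filter.2 ⟨mem_range.2 (by omega), mem_gammaFinset.2 ht⟩)).not_gt hj
  calc ∑ i ∈ I, runGain F c s i ≤ ∑ i ∈ Ico (I.min' hIne) (I.max' hIne + 1), runGain F c s i := by
        refine sum_le_sum_of_subset_of_nonneg (fun i hi => ?_) fun i hi _ => ?_
        · exact mem_Ico.2 ⟨I.min'_le i hi, Nat.lt_succ_of_le (I.le_max' i hi)⟩
        · exact R.runGain_nonneg hG hU hI hLF hc (by simp at hi; omega)
    _ = runValue F c s (I.max' hIne + 1) - runValue F c s (I.min' hIne) := sum_Ico_sub _ (by omega)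
    _ ≤ attachCost F c (prefixSet s (I.max' hIne)) t - runValue F c s (I.min' hIne) :=
        sub_le_sub_right (R.attachCost_le _ hbr t hb) _
    _ = c t := by
        rw [attachCost_eq_of_subset hI ha.2 hb.2 (prefixSet_mono hab),
          R.attachCost_eq_of_forall_notMem_gamma hG hU hI hLF har ha hfirst]
        ring

end IsGreedyPrefix

end RunValue

lemma IsGreedyPrefix.sum_mul_shVec {F : Set (Finset α)} {c : α → ℤ} {s : ℕ → α} {r : ℕ}
    (hG : IsGreedoid F) (hU : LocalUnion F) (hI : LocalInter F) (R : IsGreedyPrefix F c s r) :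
    ∑ t, (c t : ℝ) * shVec F (prefixSet s r) t = ∑ i ∈ range r, (runValue F c s (i + 1) : ℝ) := by
  have hinj : Set.InjOn s (range r) :=
    card_image_iff.1 ((R.card_prefixSet r le_rfl).trans (card_range r).symm)
  simp_rw [shVec_eq_card_filter hG.1 hU hI (R.prefixSet_mem hG.1 r le_rfl)]
  rw [sum_mul_card_filter_mem]
  refine (sum_image hinj).trans (sum_congr rfl fun i hi => ?_)
  have hir : i + 1 ≤ r := mem_range.1 hi
  have hpath : pathIn F (prefixSet s r) (s i) = pathIn F (insert (s i) (prefixSet s i)) (s i) := by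
    rw [← prefixSet_succ]
    exact pathIn_eq_of_subset hI (R.prefixSet_mem hG.1 _ hir) (R.prefixSet_mem hG.1 r le_rfl)
      (prefixSet_mono hir) (prefixSet_succ (s := s) ▸ mem_insert_self _ _)
  rw [hpath, runValue, attachCost, Int.cast_sum]

section GreedyDual

variable {F : Set (Finset α)} {c : α → ℤ} {s : ℕ → α} {r : ℕ}

noncomputable def greedyDual (F : Set (Finset α)) (c : α → ℤ) (s : ℕ → α) (r : ℕ) :
    Finset α → ℤ :=
  ∑ i ∈ range r, Pi.single (gammaFinset F (prefixSet s i)) (runGain F c s i) +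
    ∑ t, Pi.single {t}
      (c t - ∑ i ∈ range r with t ∈ gammaFinset F (prefixSet s i), runGain F c s i)

lemma IsGreedyPrefix.greedyDual_nonneg (hG : IsGreedoid F) (hU : LocalUnion F)
    (hI : LocalInter F) (hLF : LocalForest F) (hc : ∀ t, 0 ≤ c t) (R : IsGreedyPrefix F c s r) :
    0 ≤ greedyDual F c s r :=
  add_nonneg
    (sum_nonneg fun _ hi => Pi.single_nonneg.2 (R.runGain_nonneg hG hU hI hLF hc (mem_range.1 hi)))
    (sum_nonneg fun t _ => Pi.single_nonneg.2 (sub_nonneg.2 (R.sum_runGain_le hG hU hI hLF hc t)))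

lemma sum_filter_greedyDual (t : α) :
    ∑ U ∈ univ.powerset with t ∈ U, greedyDual F c s r U = c t := by
  simp only [greedyDual, Pi.add_apply, Finset.sum_apply, sum_add_distrib]
  rw [sum_comm (t := range r), sum_comm (t := (univ : Finset α))]
  simp_rw [sum_filter_mem_pi_single, mem_singleton, ← sum_filter]
  rw [filter_eq, if_pos (mem_univ t), sum_singleton]
  ring

lemma IsGreedyRun.sum_runValue_le (hG : IsGreedoid F) (hU : LocalUnion F) (hI : LocalInter F)
    (hLF : LocalForest F) (hc : ∀ t, 0 ≤ c t) (R : IsGreedyRun F c s r) :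
    ∑ i ∈ range r, runValue F c s (i + 1) ≤
      ∑ U ∈ univ.powerset, greedyDual F c s r U * ((grank F univ : ℤ) - grank F (univ \ U)) := by
  set g : Finset α → ℤ := fun U => (grank F univ : ℤ) - grank F (univ \ U)
  have hg : ∀ U, 0 ≤ g U := fun U => sub_nonneg.2 (Int.ofNat_le.2 (grank_mono sdiff_subset))
  have hA := R.prefixSet_mem hG.1
  have hrank : grank F univ = r :=
    (hG.isBase_of_gamma_eq_empty (hA r le_rfl) R.gamma_eq_empty).grank_univ.trans
      (R.card_prefixSet r le_rfl)
  have hgΓ : ∀ i ≤ r, (r : ℤ) - i ≤ g (gammaFinset F (prefixSet s i)) := fun i hi => by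
    have := hG.grank_compl_gammaFinset_le (hA i hi)
    rw [R.card_prefixSet i hi] at this
    simp only [g, hrank]
    omega
  calc ∑ i ∈ range r, runValue F c s (i + 1)
      = ∑ i ∈ range r, runGain F c s i * ((r : ℤ) - i) :=
        (sum_range_sub_mul_sub _ rfl r).symm
    _ ≤ ∑ i ∈ range r, runGain F c s i * g (gammaFinset F (prefixSet s i)) :=
        sum_le_sum fun i hi => mul_le_mul_of_nonneg_left (hgΓ i (mem_range.1 hi).le)
          (R.runGain_nonneg hG hU hI hLF hc (mem_range.1 hi))
    _ ≤ ∑ i ∈ range r, runGain F c s i * g (gammaFinset F (prefixSet s i)) +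
          ∑ t, (c t - ∑ i ∈ range r with t ∈ gammaFinset F (prefixSet s i), runGain F c s i) *
            g {t} :=
        le_add_of_nonneg_right (sum_nonneg fun t _ =>
          mul_nonneg (sub_nonneg.2 (R.sum_runGain_le hG hU hI hLF hc t)) (hg {t}))
    _ = ∑ U ∈ univ.powerset, greedyDual F c s r U * g U := by
        simp only [greedyDual, Pi.add_apply, Finset.sum_apply, add_mul, sum_mul, sum_add_distrib]
        rw [sum_comm (t := range r), sum_comm (t := (univ : Finset α))]
        simp_rw [sum_pi_single_mul]

end GreedyDual

theorem exists_integral_feasible_pair_le {F : Set (Finset α)} (hG : IsGreedoid F)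
    (hU : LocalUnion F) (hI : LocalInter F) (hLF : LocalForest F) {c : α → ℤ}
    (hc : ∀ s, 0 ≤ c s) :
    ∃ (x : α → ℝ) (y : Finset α → ℝ), (∀ s, ∃ k : ℤ, x s = k) ∧ (∀ U, ∃ k : ℤ, y U = k) ∧
      PrimalFeasible F x ∧ DualFeasible c y ∧ ∑ s, (c s : ℝ) * x s ≤ dualObjective F y := by
  rcases isEmpty_or_nonempty α with hα | hα
  · refine ⟨0, 0, fun _ => ⟨0, by simp⟩, fun _ => ⟨0, by simp⟩, fun U => ?_,
      ⟨fun _ => le_rfl, isEmptyElim⟩, by simp [dualObjective]⟩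
    simp [Subsingleton.elim U ∅]
  obtain ⟨s, r, R⟩ := exists_isGreedyRun (F := F) c
  have hB := hG.isBase_of_gamma_eq_empty (R.prefixSet_mem hG.1 r le_rfl) R.gamma_eq_empty
  refine ⟨shVec F (prefixSet s r), fun U => greedyDual F c s r U,
    fun t => ⟨((prefixSet s r).card : ℤ) - grank F ((prefixSet s r).erase t), by simp [shVec]⟩,
    fun U => ⟨_, rfl⟩, primalFeasible_shVec hG.1 hU hI hB,
    ⟨fun U => Int.cast_nonneg (R.greedyDual_nonneg hG hU hI hLF hc U),
      fun t => by simp only [← Int.cast_sum, sum_filter_greedyDual]⟩, ?_⟩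
  rw [R.sum_mul_shVec hG hU hI, dualObjective]
  exact_mod_cast R.sum_runValue_le hG hU hI hLF hc

/-- For a local forest greedoid and a non-negative integer weight function, both
the primal linear program and its dual attain their optimum at integer vectors. -/
theorem statement11 (F : Set (Finset α)) (hG : IsGreedoid F)
    (hU : LocalUnion F) (hI : LocalInter F) (hLF : LocalForest F)
    (c : α → ℤ) (hc : ∀ s, 0 ≤ c s) :
    (∃ x : α → ℝ, (∀ s, ∃ k : ℤ, x s = k) ∧
      (∀ U : Finset α,
        (grank F Finset.univ : ℝ) - (grank F (Finset.univ \ U) : ℝ) ≤ ∑ s ∈ U, x s) ∧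
      (∀ x' : α → ℝ,
        (∀ U : Finset α,
          (grank F Finset.univ : ℝ) - (grank F (Finset.univ \ U) : ℝ) ≤ ∑ s ∈ U, x' s) →
        ∑ s : α, (c s : ℝ) * x s ≤ ∑ s : α, (c s : ℝ) * x' s)) ∧
    (∃ y : Finset α → ℝ, (∀ U, ∃ k : ℤ, y U = k) ∧
      (∀ U, 0 ≤ y U) ∧
      (∀ s : α, ∑ U ∈ Finset.univ.powerset.filter (fun U => s ∈ U), y U = (c s : ℝ)) ∧
      (∀ y' : Finset α → ℝ, (∀ U, 0 ≤ y' U) →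
        (∀ s : α, ∑ U ∈ Finset.univ.powerset.filter (fun U => s ∈ U), y' U = (c s : ℝ)) →
        ∑ U ∈ Finset.univ.powerset,
            y' U * ((grank F Finset.univ : ℝ) - (grank F (Finset.univ \ U) : ℝ)) ≤
          ∑ U ∈ Finset.univ.powerset,
            y U * ((grank F Finset.univ : ℝ) - (grank F (Finset.univ \ U) : ℝ)))) := by
  obtain ⟨x, y, hxint, hyint, hx, hy, hxy⟩ := exists_integral_feasible_pair_le hG hU hI hLF hc
  exact ⟨⟨x, hxint, hx, fun x' hx' => hxy.trans (dualObjective_le hx' hy)⟩,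
    ⟨y, hyint, hy.1, hy.2, fun y' hy'0 hy'row => (dualObjective_le hx ⟨hy'0, hy'row⟩).trans hxy⟩⟩
end

section
/- Let G = (S, 𝓕) be an arbitrary greedoid with set of bases 𝓑 and let w : 𝓕 → ℝ be an objective function satisfying: whenever A ⊆ B, A ∈ 𝓕, A ∪ {x} ∈ 𝓕, B ∈ 𝓑, x ∈ S \ B and w(A ∪ {x}) ≥ w(A ∪ {u}) for every u ∈ Γ(A), there exists y ∈ B \ A such that (B \ {y}) ∪ {x} ∈ 𝓑 and w((B \ {y}) ∪ {x}) ≥ w(B). Then every greedy base for maximizing w is a base of maximum w-value among all bases. -/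
open Finset

variable {α : Type*} [DecidableEq α] [Fintype α]

/-! Walk along a greedy ordering `x₁, …, x_r` of `Bg`, maintaining a base `B'` with `w B ≤ w B'`
that contains the prefix `A = {x₁, …, x_i}`, starting from `B' = B`. Since `x_{i+1}` was a greedy
choice at `A`, the exchange hypothesis either finds `x_{i+1}` already in `B'` or swaps it in for
some `y ∈ B' \ A` without decreasing `w`. In the end `Bg ⊆ B'`, and two bases cannot be nested
properly. -/

theorem IsBase.eq_of_subset {β : Type*} {F : Set (Finset β)} {B B' : Finset β} (hB : IsBase F B)
    (hB' : IsBase F B') (h : B ⊆ B') : B = B' :=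
  eq_of_subset_of_card_le h (hB.2 B' hB'.1)

section

variable {β : Type*} [DecidableEq β]

theorem List.toFinset_take_add_one (l : List β) {i : ℕ} (hi : i < l.length) :
    (l.take (i + 1)).toFinset = insert l[i] (l.take i).toFinset := by
  rw [← List.take_concat_get' l i hi, List.toFinset_append]
  ext
  simp [or_comm]

def GreedyExchangeProperty (F : Set (Finset β)) (w : Finset β → ℝ) : Prop :=
  ∀ (A B : Finset β) (x : β),
    A ∈ F → insert x A ∈ F → IsBase F B → A ⊆ B → x ∉ B →
    (∀ u ∈ Gamma F A, w (insert u A) ≤ w (insert x A)) →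
    ∃ y ∈ B, y ∉ A ∧ IsBase F (insert x (B.erase y)) ∧ w B ≤ w (insert x (B.erase y))

namespace GreedyExchangeProperty

variable {F : Set (Finset β)} {w : Finset β → ℝ}

theorem exists_base_insert_subset (hw : GreedyExchangeProperty F w) {A B : Finset β} {x : β}
    (hA : A ∈ F) (hAx : insert x A ∈ F) (hB : IsBase F B) (hAB : A ⊆ B)
    (hx : ∀ u ∈ Gamma F A, w (insert u A) ≤ w (insert x A)) :
    ∃ B', IsBase F B' ∧ insert x A ⊆ B' ∧ w B ≤ w B' := by
  by_cases hxB : x ∈ B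
  · exact ⟨B, hB, insert_subset hxB hAB, le_rfl⟩
  obtain ⟨y, -, hyA, hB', hwB'⟩ := hw A B x hA hAx hB hAB hxB hx
  exact ⟨_, hB', insert_subset_insert x (subset_erase.2 ⟨hAB, hyA⟩), hwB'⟩

theorem exists_base_take_subset (hw : GreedyExchangeProperty F w) {l : List β}
    (hl : FeasibleOrdering F l)
    (hgreedy : ∀ (i : ℕ) (hi : i < l.length), ∀ y ∈ Gamma F (l.take i).toFinset,
      w (insert y (l.take i).toFinset) ≤ w (insert l[i] (l.take i).toFinset))
    {B : Finset β} (hB : IsBase F B) :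
    ∀ i ≤ l.length, ∃ B', IsBase F B' ∧ (l.take i).toFinset ⊆ B' ∧ w B ≤ w B' := by
  intro i hi
  induction i with
  | zero => exact ⟨B, hB, by simp, le_rfl⟩
  | succ i ih =>
    have hi : i < l.length := by omega
    obtain ⟨B', hB', hsub, hwB'⟩ := ih hi.le
    have hfeas : insert l[i] (l.take i).toFinset ∈ F :=
      List.toFinset_take_add_one l hi ▸ hl.2 (i + 1)
    obtain ⟨B'', hB'', hsub', hwB''⟩ :=
      hw.exists_base_insert_subset (hl.2 i) hfeas hB' hsub (hgreedy i hi)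
    rw [List.toFinset_take_add_one l hi]
    exact ⟨B'', hB'', hsub', hwB'.trans hwB''⟩

end GreedyExchangeProperty

end

theorem statement14_general (F : Set (Finset α)) (w : Finset α → ℝ)
    (hprop : ∀ (A B : Finset α) (x : α),
      A ∈ F → insert x A ∈ F → IsBase F B → A ⊆ B → x ∉ B →
      (∀ u ∈ Gamma F A, w (insert u A) ≤ w (insert x A)) →
      ∃ y ∈ B, y ∉ A ∧ IsBase F (insert x (B.erase y)) ∧ w B ≤ w (insert x (B.erase y)))
    (Bg : Finset α) (hBg : GreedyMaxBase F w Bg) :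
    ∀ B : Finset α, IsBase F B → w B ≤ w Bg := by
  intro B hB
  obtain ⟨hBg_base, l, hl, rfl, hgreedy⟩ := hBg
  have hw : GreedyExchangeProperty F w := hprop
  obtain ⟨B', hB', hsub, hwB'⟩ := hw.exists_base_take_subset hl hgreedy hB l.length le_rfl
  rw [List.take_length] at hsub
  rwa [hBg_base.eq_of_subset hB' hsub]

/-- Sufficient condition for the optimality of the greedy algorithm on an
arbitrary greedoid. -/
theorem statement14 (F : Set (Finset α)) (hG : IsGreedoid F) (w : Finset α → ℝ)
    (hprop : ∀ (A B : Finset α) (x : α),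
      A ∈ F → insert x A ∈ F → IsBase F B → A ⊆ B → x ∉ B →
      (∀ u ∈ Gamma F A, w (insert u A) ≤ w (insert x A)) →
      ∃ y ∈ B, y ∉ A ∧ IsBase F (insert x (B.erase y)) ∧ w B ≤ w (insert x (B.erase y)))
    (Bg : Finset α) (hBg : GreedyMaxBase F w Bg) :
    ∀ B : Finset α, IsBase F B → w B ≤ w Bg :=
  statement14_general F w hprop Bg hBg
end

section
/- Let G = (S, 𝓕) be a greedoid and w : 𝓕 → ℝ an objective function, and suppose condition (1) is violated: there exist A ⊆ B with A ∈ 𝓕, A ∪ {x} ∈ 𝓕, B a base of G, x ∈ S \ B, such that w(A ∪ {x}) ≥ w(A ∪ {u}) for every u ∈ Γ(A), yet for every y ∈ B \ A with (B \ {y}) ∪ {x} a base one has w((B \ {y}) ∪ {x}) < w(B). Then there exists a minor H of G (obtained by deleting a subset Y of the ground set and contracting a feasible set, with the objective function modified accordingly) on which some greedy base for maximizing the induced objective w_H is not a base of maximum w_H-value. -/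
open Finset

variable {α : Type*} [DecidableEq α] [Fintype α]

/-!
Delete everything outside `B ∪ {x}` and contract `A`. In the resulting minor `H`, `B \ A` is a
base, and by the choice of `x` the greedy algorithm may pick `x` first; completing this choice
greedily gives a greedy base `Bg` of `H`. Then `Bg ∪ A` is a base of `G` inside `B ∪ {x}`
containing `x`, i.e. `(B \ {y}) ∪ {x}` for some `y ∈ B \ A`, so
`w_H(Bg) < w(B) = w_H(B \ A)`.
-/

/-- The minor of `F` obtained by contracting `X` and deleting everything outside `X ∪ g`. -/
def minor (F : Set (Finset α)) (X g : Finset α) : Set (Finset α) :=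
  {Z | Z ⊆ g ∧ Z ∪ X ∈ F}

def IsGreedyOrdering (F : Set (Finset α)) (w : Finset α → ℝ) (l : List α) : Prop :=
  FeasibleOrdering F l ∧ ∀ (i : ℕ) (hi : i < l.length), ∀ y ∈ Gamma F (l.take i).toFinset,
    w (insert y (l.take i).toFinset) ≤ w (insert (l.get ⟨i, hi⟩) (l.take i).toFinset)

section Greedoid

variable {F : Set (Finset α)}

omit [Fintype α] in
theorem IsGreedoid.minor (hG : IsGreedoid F) {X g : Finset α} (hX : X ∈ F)
    (hgX : Disjoint g X) : IsGreedoid (minor F X g) := by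
  refine ⟨⟨empty_subset _, by simpa using hX⟩, ?_⟩
  rintro Z₁ ⟨hZ₁g, hZ₁⟩ Z₂ ⟨hZ₂g, hZ₂⟩ hlt
  have hcard : (Z₁ ∪ X).card < (Z₂ ∪ X).card := by
    rw [card_union_of_disjoint (hgX.mono_left hZ₁g), card_union_of_disjoint (hgX.mono_left hZ₂g)]
    omega
  obtain ⟨y, hy, hyZ₁X, hins⟩ := hG.2 _ hZ₁ _ hZ₂ hcard
  have hyX : y ∉ X := fun h => hyZ₁X (mem_union_right _ h)
  have hyZ₂ : y ∈ Z₂ := (mem_union.1 hy).resolve_right hyX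
  exact ⟨y, hyZ₂, fun h => hyZ₁X (mem_union_left _ h), insert_subset (hZ₂g hyZ₂) hZ₁g,
    by rwa [insert_union]⟩

omit [Fintype α] in
theorem IsGreedoid.exists_mem_gamma_of_not_isBase (hG : IsGreedoid F) {S : Finset α}
    (hS : S ∈ F) (hSB : ¬ IsBase F S) : (Gamma F S).Nonempty := by
  obtain ⟨C, hC, hlt⟩ : ∃ C ∈ F, S.card < C.card := by
    by_contra! h
    exact hSB ⟨hS, h⟩
  obtain ⟨z, -, hzS, hins⟩ := hG.2 _ hS _ hC hlt
  exact ⟨z, hzS, hins⟩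

end Greedoid

section GreedyOrdering

variable {F : Set (Finset α)} {w : Finset α → ℝ} {l : List α}

omit [Fintype α] in
theorem FeasibleOrdering.toFinset_mem (hl : FeasibleOrdering F l) : l.toFinset ∈ F := by
  simpa using hl.2 l.length

omit [Fintype α] in
theorem FeasibleOrdering.append_singleton (hl : FeasibleOrdering F l) {m : α}
    (hm : m ∈ Gamma F l.toFinset) : FeasibleOrdering F (l ++ [m]) := by
  have hml : m ∉ l := fun h => hm.1 (List.mem_toFinset.2 h)
  refine ⟨List.nodup_append.2 ⟨hl.1, List.nodup_singleton m,
    fun a ha b hb hab => hml (by rw [List.mem_singleton.1 hb] at hab; exact hab ▸ ha)⟩, fun i => ?_⟩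
  rcases le_or_gt i l.length with h | h
  · rw [List.take_append_of_le_length h]
    exact hl.2 i
  · have hlm : (l ++ [m]).toFinset = insert m l.toFinset := by ext; simp
    rw [List.take_of_length_le (by simp; omega), hlm]
    exact hm.2

omit [Fintype α] in
theorem IsGreedyOrdering.append_singleton (hl : IsGreedyOrdering F w l) {m : α}
    (hm : m ∈ Gamma F l.toFinset)
    (hmax : ∀ y ∈ Gamma F l.toFinset, w (insert y l.toFinset) ≤ w (insert m l.toFinset)) :
    IsGreedyOrdering F w (l ++ [m]) := by
  refine ⟨hl.1.append_singleton hm, fun i hi y hy => ?_⟩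
  rcases Nat.lt_or_eq_of_le (Nat.lt_succ_iff.1 (by simpa using hi)) with h | rfl
  · rw [List.take_append_of_le_length h.le] at hy ⊢
    simpa [List.getElem_append_left h] using hl.2 i h y hy
  · rw [List.take_append_of_le_length le_rfl, List.take_length] at hy ⊢
    simpa using hmax y hy

omit [Fintype α] in
theorem isGreedyOrdering_singleton (h0 : ∅ ∈ F) {x : α} (hx : x ∈ Gamma F ∅)
    (hmax : ∀ y ∈ Gamma F ∅, w (insert y ∅) ≤ w (insert x ∅)) : IsGreedyOrdering F w [x] :=
  have hnil : IsGreedyOrdering F w [] := ⟨⟨List.nodup_nil, fun _ => by simpa using h0⟩,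
    fun _ hi => absurd hi (Nat.not_lt_zero _)⟩
  hnil.append_singleton hx hmax

theorem IsGreedyOrdering.exists_greedyMaxBase (hG : IsGreedoid F) {l : List α}
    (hl : IsGreedyOrdering F w l) :
    ∃ l' : List α, l <+: l' ∧ GreedyMaxBase F w l'.toFinset := by
  by_cases hbase : IsBase F l.toFinset
  · exact ⟨l, List.prefix_refl l, hbase, l, hl.1, rfl, hl.2⟩
  obtain ⟨m, hm, hmax⟩ := (Gamma F l.toFinset).exists_max_image (fun y => w (insert y l.toFinset))
    (Set.toFinite _) (hG.exists_mem_gamma_of_not_isBase hl.1.toFinset_mem hbase)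
  have hlm := hl.append_singleton hm hmax
  have : Fintype.card α - (l ++ [m]).length < Fintype.card α - l.length := by
    have := hlm.1.1.length_le_card
    simp only [List.length_append, List.length_singleton] at this ⊢
    omega
  obtain ⟨l', hpre, hgb⟩ := hlm.exists_greedyMaxBase hG
  exact ⟨l', (List.prefix_append l [m]).trans hpre, hgb⟩
termination_by Fintype.card α - l.length

end GreedyOrdering

section Minor

variable {F : Set (Finset α)} {A B g : Finset α}

omit [Fintype α] in
theorem IsBase.sdiff_isBase_minor (hB : IsBase F B) (hAB : A ⊆ B) (hBg : B \ A ⊆ g)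
    (hgA : Disjoint g A) : IsBase (minor F A g) (B \ A) := by
  refine ⟨⟨hBg, by rw [sdiff_union_of_subset hAB]; exact hB.1⟩, ?_⟩
  rintro C ⟨hCg, hCF⟩
  have := hB.2 _ hCF
  rw [card_union_of_disjoint (hgA.mono_left hCg)] at this
  rw [card_sdiff_of_subset hAB]
  omega

omit [Fintype α] in
theorem IsBase.union_isBase_of_minor (hB : IsBase F B) (hAB : A ⊆ B) (hBg : B \ A ⊆ g)
    (hgA : Disjoint g A) {C : Finset α} (hC : IsBase (minor F A g) C) : IsBase F (C ∪ A) := by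
  refine ⟨hC.1.2, fun D hD => ?_⟩
  have h1 := hC.2 _ (hB.sdiff_isBase_minor hAB hBg hgA).1
  have h2 := hB.2 D hD
  have h3 := card_le_card hAB
  rw [card_union_of_disjoint (hgA.mono_left hC.1.1)]
  rw [card_sdiff_of_subset hAB] at h1
  omega

end Minor

omit [Fintype α] in
theorem Finset.exists_eq_insert_erase_of_subset_insert {x : α} {B C : Finset α}
    (hCB : C ⊆ insert x B) (hxC : x ∈ C) (hxB : x ∉ B) (hcard : C.card = B.card) :
    ∃ y ∈ B, y ∉ C ∧ C = insert x (B.erase y) := by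
  obtain ⟨y, hyB, hyC⟩ := not_subset.1 fun hBC : B ⊆ C => by
    have := card_le_card (insert_subset hxC hBC)
    rw [card_insert_of_notMem hxB] at this
    omega
  refine ⟨y, hyB, hyC, eq_of_subset_of_card_le (fun z hz => ?_) ?_⟩
  · rcases mem_insert.1 (hCB hz) with rfl | hzB
    · exact mem_insert_self _ _
    · exact mem_insert_of_mem (mem_erase.2 ⟨by rintro rfl; exact hyC hz, hzB⟩)
  · rw [card_insert_of_notMem fun h => hxB (mem_of_mem_erase h), card_erase_of_mem hyB, hcard]
    have := card_pos.2 ⟨y, hyB⟩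
    omega

/-- If condition (1) is violated for a greedoid then it has a minor on which
some greedy base is not optimal. -/
theorem statement15 (F : Set (Finset α)) (hG : IsGreedoid F) (w : Finset α → ℝ)
    (A B : Finset α) (x : α)
    (hA : A ∈ F) (hAx : insert x A ∈ F) (hB : IsBase F B) (hAB : A ⊆ B) (hx : x ∉ B)
    (hgr : ∀ u ∈ Gamma F A, w (insert u A) ≤ w (insert x A))
    (hviol : ∀ y ∈ B, y ∉ A → IsBase F (insert x (B.erase y)) →
      w (insert x (B.erase y)) < w B) :
    -- There is a minor `H = (G \ Y) / X` (delete `Y`, contract the feasible set `X`,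
    -- objective `w_H(Z) = w(Z ∪ X)`) on which some greedy base is not optimal:
    ∃ Y X : Finset α, X ∈ F ∧ Disjoint X Y ∧
      ∃ Bg : Finset α,
        GreedyMaxBase {Z : Finset α | Z ⊆ ((Finset.univ \ Y) \ X) ∧ Z ∪ X ∈ F}
          (fun Z => w (Z ∪ X)) Bg ∧
        ∃ B' : Finset α,
          IsBase {Z : Finset α | Z ⊆ ((Finset.univ \ Y) \ X) ∧ Z ∪ X ∈ F} B' ∧
          w (Bg ∪ X) < w (B' ∪ X) := by
  refine ⟨univ \ insert x B, A, hA, disjoint_sdiff.mono_left (hAB.trans (subset_insert x B)), ?_⟩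
  rw [Finset.sdiff_sdiff_eq_self (subset_univ _)]
  set H := minor F A (insert x B \ A)
  have hgA : Disjoint (insert x B \ A) A := sdiff_disjoint
  have hBg : B \ A ⊆ insert x B \ A := sdiff_subset_sdiff (subset_insert x B) le_rfl
  have hH : IsGreedoid H := hG.minor hA hgA
  have hx₀ : x ∈ Gamma H ∅ :=
    ⟨notMem_empty x, by simpa [H, minor] using ⟨fun h => hx (hAB h), hAx⟩⟩
  have hstart : IsGreedyOrdering H (fun Z => w (Z ∪ A)) [x] := by
    refine isGreedyOrdering_singleton hH.1 hx₀ fun y ⟨_, hyg, hyF⟩ => ?_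
    simp only [insert_union, empty_union] at hyF ⊢
    exact hgr y ⟨(mem_sdiff.1 (hyg (mem_insert_self y ∅))).2, hyF⟩
  obtain ⟨l, hpre, hgb⟩ := hstart.exists_greedyMaxBase hH
  have hbase : IsBase F (l.toFinset ∪ A) := hB.union_isBase_of_minor hAB hBg hgA hgb.1
  obtain ⟨y, hyB, hyC, heq⟩ := exists_eq_insert_erase_of_subset_insert
    (union_subset (hgb.1.1.1.trans sdiff_subset) (hAB.trans (subset_insert x B)))
    (mem_union_left _ (List.mem_toFinset.2 (hpre.subset (List.mem_singleton_self x)))) hx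
    (le_antisymm (hB.2 _ hbase.1) (hbase.2 _ hB.1))
  refine ⟨l.toFinset, hgb, B \ A, hB.sdiff_isBase_minor hAB hBg hgA, ?_⟩
  rw [sdiff_union_of_subset hAB, heq]
  exact hviol y hyB (fun h => hyC (mem_union_right _ h)) (heq ▸ hbase)
end

section
/- Let G = (S, 𝓕) be an interval greedoid and w : 𝓕 → ℝ an objective function satisfying: whenever A ⊆ B with A ∈ 𝓕, A ∪ {x} ∈ 𝓕, x, z ∈ S \ B, B ∪ {x} and B ∪ {z} are bases of G, Δ(B) ∪ {x, z} ∉ 𝓕, and w(A ∪ {x}) ≥ w(A ∪ {u}) for every u ∈ Γ(A), then w(B ∪ {x}) ≥ w(B ∪ {z}). Then every greedy base for maximizing w is a base of maximum w-value among all bases. -/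
open Finset

variable {α : Type*} [DecidableEq α] [Fintype α]

lemma greedoid_extend16 (F : Set (Finset α)) (hG : IsGreedoid F) :
    ∀ (k : ℕ) (X : Finset α), X ∈ F → ∀ T ∈ F, X.card + k = T.card →
      ∃ X', X' ∈ F ∧ X ⊆ X' ∧ X' ⊆ X ∪ T ∧ X'.card = T.card := by
  intro k
  induction k with
  | zero =>
    intro X hX T hT h
    exact ⟨X, hX, subset_rfl, subset_union_left, by omega⟩
  | succ k ih =>
    intro X hX T hT h
    obtain ⟨y, hyT, hyX, hins⟩ := hG.2 X hX T hT (by omega)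
    obtain ⟨X', hX', h1, h2, h3⟩ := ih (insert y X) hins T hT
      (by rw [card_insert_of_notMem hyX]; omega)
    refine ⟨X', hX', (subset_insert y X).trans h1, h2.trans ?_, h3⟩
    exact union_subset (insert_subset (mem_union_right _ hyT) subset_union_left)
      subset_union_right

lemma missing_elt16 (B X' : Finset α) (x : α) (hxB : x ∉ B) (hsub : X' ⊆ insert x B)
    (hx : x ∈ X') (hcard : X'.card = B.card) :
    ∃ z ∈ B, z ∉ X' ∧ X' = insert x (B.erase z) := by
  have hc1 : (insert x B).card = B.card + 1 := card_insert_of_notMem hxB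
  have hdc : ((insert x B) \ X').card = 1 := by rw [card_sdiff_of_subset hsub]; omega
  obtain ⟨z, hz⟩ := card_eq_one.mp hdc
  have hzmem : z ∈ insert x B \ X' := hz ▸ mem_singleton_self z
  obtain ⟨hzB', hzX'⟩ := mem_sdiff.mp hzmem
  have hzx : z ≠ x := fun h => hzX' (h ▸ hx)
  have hzB : z ∈ B := by
    rcases mem_insert.mp hzB' with h | h
    · exact absurd h hzx
    · exact h
  refine ⟨z, hzB, hzX', ?_⟩
  have h1 : X' ⊆ (insert x B).erase z := subset_erase.mpr ⟨hsub, hzX'⟩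
  have h2 : ((insert x B).erase z).card = B.card := by
    rw [card_erase_of_mem hzB']; omega
  have heq : X' = (insert x B).erase z := eq_of_subset_of_card_le h1 (by omega)
  rw [heq, erase_insert_of_ne hzx.symm]

lemma inner_step16 (F : Set (Finset α)) (hG : IsGreedoid F)
    (Δ : Finset α → Finset α)
    (hΔ : ∀ X : Finset α, Subfeasible F X →
      Δ X ∈ F ∧ Δ X ⊆ X ∧ ∀ Z ∈ F, Z ⊆ X → Z ⊆ Δ X)
    (w : Finset α → ℝ)
    (hcond : ∀ (A B : Finset α) (x z : α),
      A ∈ F → insert x A ∈ F → A ⊆ B → x ∉ B → z ∉ B →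
      IsBase F (insert x B) → IsBase F (insert z B) →
      insert x (insert z (Δ B)) ∉ F →
      (∀ u ∈ Gamma F A, w (insert u A) ≤ w (insert x A)) →
      w (insert z B) ≤ w (insert x B))
    (A B : Finset α) (x : α) (hA : A ∈ F) (hxA : insert x A ∈ F)
    (hgreedy : ∀ u ∈ Gamma F A, w (insert u A) ≤ w (insert x A))
    (hB : IsBase F B) (hAB : A ⊆ B) (hxB : x ∉ B) :
    ∃ B', IsBase F B' ∧ insert x A ⊆ B' ∧ w B ≤ w B' := by
  classical
  -- Step 1: find some valid removal z₀
  obtain ⟨X0, hX0F, hs1, hs2, hs3⟩ := greedoid_extend16 F hG (B.card - (insert x A).card)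
    (insert x A) hxA B hB.1 (by have := hB.2 _ hxA; omega)
  have hX0sub : X0 ⊆ insert x B := by
    refine hs2.trans (union_subset ?_ (subset_insert x B))
    exact insert_subset_insert x hAB
  have hxX0 : x ∈ X0 := hs1 (mem_insert_self x A)
  obtain ⟨z0, hz0B, hz0X, hz0eq⟩ := missing_elt16 B X0 x hxB hX0sub hxX0 hs3
  let V : Finset α := B.filter (fun z => z ∉ A ∧ IsBase F (insert x (B.erase z)))
  have hz0V : z0 ∈ V := by
    refine mem_filter.mpr ⟨hz0B, fun h => hz0X (hs1 (mem_insert_of_mem h)), ?_⟩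
    rw [← hz0eq]
    exact ⟨hX0F, fun C hC => hs3 ▸ hB.2 C hC⟩
  -- Step 2: pick valid z maximizing |Δ (B.erase z)|
  obtain ⟨z, hzV, hzmax⟩ := V.exists_max_image (fun z => (Δ (B.erase z)).card) ⟨z0, hz0V⟩
  obtain ⟨hzB, hzprop⟩ := mem_filter.mp hzV
  obtain ⟨hzA, hzbase⟩ := hzprop
  set D := Δ (B.erase z) with hD
  obtain ⟨hDF, hDsub, hDmax⟩ := hΔ (B.erase z) ⟨B, hB.1, erase_subset _ _⟩
  have hAD : A ⊆ D := hDmax A hA (subset_erase.mpr ⟨hAB, hzA⟩)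
  -- insert z D ∈ F
  have hDltB : D.card < B.card := lt_of_le_of_lt (card_le_card hDsub) (card_erase_lt_of_mem hzB)
  obtain ⟨b, hbB, hbD, hbF⟩ := hG.2 D hDF B hB.1 hDltB
  have hbz : b = z := by
    by_contra hne
    exact hbD (hDmax _ hbF (insert_subset (mem_erase.mpr ⟨hne, hbB⟩) hDsub)
      (mem_insert_self b D))
  have hzDF : insert z D ∈ F := hbz ▸ hbF
  -- Step 3: the corrected condition's extra hypothesis holds
  have hxBD : x ∉ D := fun h => hxB (erase_subset _ _ (hDsub h))
  have hzD : z ∉ D := fun h => (notMem_erase z B) (hDsub h)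
  have hkey : insert x (insert z D) ∉ F := by
    intro hEF
    have hTcard : (insert x (B.erase z)).card = B.card := by
      rw [card_insert_of_notMem (fun h => hxB (erase_subset _ _ h)),
        card_erase_of_mem hzB]
      have : 0 < B.card := card_pos.mpr ⟨z, hzB⟩
      omega
    obtain ⟨X', hX'F, ht1, ht2, ht3⟩ := greedoid_extend16 F hG
      ((insert x (B.erase z)).card - (insert x (insert z D)).card)
      (insert x (insert z D)) hEF (insert x (B.erase z)) hzbase.1
      (by have := hB.2 _ hEF; omega)
    have hX'sub : X' ⊆ insert x B := by
      refine ht2.trans (union_subset ?_ ?_)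
      · exact insert_subset (mem_insert_self x B)
          (insert_subset (mem_insert_of_mem hzB)
            (fun a ha => mem_insert_of_mem (erase_subset _ _ (hDsub ha))))
      · exact insert_subset_insert x (erase_subset _ _)
    have hxX' : x ∈ X' := ht1 (mem_insert_self _ _)
    obtain ⟨y, hyB, hyX', hyeq⟩ := missing_elt16 B X' x hxB hX'sub hxX' (by omega)
    have hyD : y ∉ D := fun h => hyX' (ht1 (mem_insert_of_mem (mem_insert_of_mem h)))
    have hyz : y ≠ z := fun h => hyX' (ht1 (mem_insert_of_mem (h ▸ mem_insert_self z D)))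
    have hyA : y ∉ A := fun h => hyD (hAD h)
    have hyV : y ∈ V := by
      refine mem_filter.mpr ⟨hyB, hyA, ?_⟩
      rw [← hyeq]
      exact ⟨hX'F, fun C hC => by rw [ht3, hTcard]; exact hB.2 C hC⟩
    obtain ⟨hDyF, hDysub, hDymax⟩ := hΔ (B.erase y) ⟨B, hB.1, erase_subset _ _⟩
    have hDsubDy : D ⊆ Δ (B.erase y) :=
      hDymax D hDF (subset_erase.mpr ⟨hDsub.trans (erase_subset _ _), hyD⟩)
    have hDeq : Δ (B.erase y) = D :=
      (eq_of_subset_of_card_le hDsubDy (hzmax y hyV)).symm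
    have hzDy : insert z D ⊆ Δ (B.erase y) :=
      hDymax _ hzDF (insert_subset (mem_erase.mpr ⟨Ne.symm hyz, hzB⟩)
        (subset_erase.mpr ⟨hDsub.trans (erase_subset _ _), hyD⟩))
    exact hzD (hDeq ▸ hzDy (mem_insert_self z D))
  -- Step 4: apply the condition
  have hw := hcond A (B.erase z) x z hA hxA (subset_erase.mpr ⟨hAB, hzA⟩)
    (fun h => hxB (erase_subset _ _ h)) (notMem_erase z B) hzbase
    (by rw [insert_erase hzB]; exact hB) hkey hgreedy
  rw [insert_erase hzB] at hw
  exact ⟨insert x (B.erase z), hzbase,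
    insert_subset_insert x (subset_erase.mpr ⟨hAB, hzA⟩), hw⟩

/-- Corrected sufficient condition for the optimality of the greedy algorithm
on interval greedoids. -/
theorem statement16 (F : Set (Finset α)) (hG : IsGreedoid F) (hU : LocalUnion F)
    (Δ : Finset α → Finset α)
    (hΔ : ∀ X : Finset α, Subfeasible F X →
      Δ X ∈ F ∧ Δ X ⊆ X ∧ ∀ Z ∈ F, Z ⊆ X → Z ⊆ Δ X)
    (w : Finset α → ℝ)
    (hcond : ∀ (A B : Finset α) (x z : α),
      A ∈ F → insert x A ∈ F → A ⊆ B → x ∉ B → z ∉ B →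
      IsBase F (insert x B) → IsBase F (insert z B) →
      insert x (insert z (Δ B)) ∉ F →
      (∀ u ∈ Gamma F A, w (insert u A) ≤ w (insert x A)) →
      w (insert z B) ≤ w (insert x B))
    (Bg : Finset α) (hBg : GreedyMaxBase F w Bg) :
    ∀ B : Finset α, IsBase F B → w B ≤ w Bg := by
  obtain ⟨hBgBase, l, ⟨hnd, hpref⟩, hlBg, hgr⟩ := hBg
  have key : ∀ n i, i + n = l.length → ∀ B, IsBase F B →
      (l.take i).toFinset ⊆ B → w B ≤ w Bg := by
    intro n
    induction n with
    | zero =>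
      intro i hi B hBbase hsub
      rw [List.take_of_length_le (by omega), hlBg] at hsub
      rw [eq_of_subset_of_card_le hsub (hBgBase.2 B hBbase.1)]
    | succ n ih =>
      intro i hi B hBbase hsub
      have hilen : i < l.length := by omega
      have htake : (l.take (i+1)).toFinset
          = insert (l.get ⟨i, hilen⟩) (l.take i).toFinset := by
        have h1 : l.take (i+1) = l.take i ++ [l.get ⟨i, hilen⟩] := by
          rw [List.take_succ]
          congr 1
          rw [List.getElem?_eq_getElem hilen]
          rfl
        rw [h1, List.toFinset_append]
        ext a; simp [or_comm]
      by_cases hx : l.get ⟨i, hilen⟩ ∈ B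
      · exact ih (i+1) (by omega) B hBbase (by rw [htake]; exact insert_subset hx hsub)
      · obtain ⟨B', hB', hsub', hw⟩ := inner_step16 F hG Δ hΔ w hcond
          (l.take i).toFinset B (l.get ⟨i, hilen⟩) (hpref i) (htake ▸ hpref (i+1))
          (hgr i hilen) hBbase hsub hx
        exact le_trans hw (ih (i+1) (by omega) B' hB' (htake ▸ hsub'))
  intro B hB
  exact key l.length 0 (by omega) B hB (by simp)
end

section
/- Let G = (S, 𝓕) be a local poset greedoid, B ⊆ S, and x, z ∈ S \ B such that B ∪ {x} ∈ 𝓕, B ∪ {z} ∈ 𝓕 and Δ(B) ∪ {x, z} ∉ 𝓕. Then P_e^{B∪{x}} ∩ (B \ Δ(B)) = P_e^{B∪{z}} ∩ (B \ Δ(B)) holds for every e ∈ B \ Δ(B). -/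
open Finset

variable {α : Type*} [DecidableEq α] [Fintype α]

set_option linter.unusedSectionVars false in
theorem statement17_aux (F : Set (Finset α)) (hG : IsGreedoid F)
    (hU : LocalUnion F) (hI : LocalInter F)
    (Δ : Finset α → Finset α)
    (hΔ : ∀ X : Finset α, Subfeasible F X →
      Δ X ∈ F ∧ Δ X ⊆ X ∧ ∀ Z ∈ F, Z ⊆ X → Z ⊆ Δ X)
    (P : Finset α → α → Finset α)
    (hP : ∀ A ∈ F, ∀ e ∈ A, IsPathIn F A e (P A e))
    (B : Finset α) (x z : α) (hx : x ∉ B) (hz : z ∉ B)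
    (hBx : insert x B ∈ F) (hBz : insert z B ∈ F)
    (hxz : insert x (insert z (Δ B)) ∉ F)
    (e : α) (heB : e ∈ B) (heD : e ∉ Δ B) (f : α) (hfB : f ∈ B) (hfD : f ∉ Δ B)
    (hfP : f ∈ P (insert x B) e) : f ∈ P (insert z B) e := by
  obtain ⟨hDF, hDB, hDmax⟩ := hΔ B ⟨insert x B, hBx, subset_insert x B⟩
  -- insert x (Δ B) ∈ F
  have hDx : insert x (Δ B) ∈ F := by
    obtain ⟨y, hy1, hy2, hy3⟩ := hG.2 (Δ B) hDF (insert x B) hBx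
      (lt_of_le_of_lt (card_le_card hDB) (by rw [card_insert_of_notMem hx]; omega))
    rcases mem_insert.mp hy1 with h | h
    · rwa [h] at hy3
    · exact absurd (hDmax _ hy3 (insert_subset h hDB) (mem_insert_self y _)) hy2
  have hDz : insert z (Δ B) ∈ F := by
    obtain ⟨y, hy1, hy2, hy3⟩ := hG.2 (Δ B) hDF (insert z B) hBz
      (lt_of_le_of_lt (card_le_card hDB) (by rw [card_insert_of_notMem hz]; omega))
    rcases mem_insert.mp hy1 with h | h
    · rwa [h] at hy3
    · exact absurd (hDmax _ hy3 (insert_subset h hDB) (mem_insert_self y _)) hy2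
  obtain ⟨hP2F, hP2sub, heP2, hP2min⟩ := hP _ hBz e (mem_insert_of_mem heB)
  set P2 := P (insert z B) e with hP2def
  set Q : Finset α := P2 ∪ Δ B with hQdef
  have hQsub : Q ⊆ insert z B :=
    union_subset hP2sub (hDB.trans (subset_insert _ _))
  have hQF : Q ∈ F := hU _ hP2F _ hDF ⟨insert z B, hBz, hQsub⟩
  have hzQ : z ∈ Q := by
    by_contra hzQ
    have hQB : Q ⊆ B := fun a ha => by
      rcases mem_insert.mp (hQsub ha) with h | h
      · exact absurd (h ▸ ha) hzQ
      · exact h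
    exact heD (hDmax _ hQF hQB (mem_union_left _ heP2))
  set U : Finset α := insert x (Q ∩ B) with hUdef
  have hUsub : U ⊆ insert x B := insert_subset_insert _ inter_subset_right
  obtain ⟨hTF, hTU, hTmax⟩ := hΔ U ⟨insert x B, hBx, hUsub⟩
  set T := Δ U with hTdef
  have hDQB : Δ B ⊆ Q ∩ B := subset_inter subset_union_right hDB
  have hDxT : insert x (Δ B) ⊆ T :=
    hTmax _ hDx (insert_subset (mem_insert_self x _) (hDQB.trans (subset_insert _ _)))
  have hQBT : Q ∩ B ⊆ T := by
    by_contra hcon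
    obtain ⟨g, hg1, hg2⟩ := not_subset.mp hcon
    -- |T| < |Q|
    have hQeq : Q = insert z (Q ∩ B) := by
      apply Subset.antisymm
      · intro a ha
        rcases mem_insert.mp (hQsub ha) with h | h
        · exact h ▸ mem_insert_self _ _
        · exact mem_insert_of_mem (mem_inter.mpr ⟨ha, h⟩)
      · exact insert_subset hzQ inter_subset_left
    have hzQB : z ∉ Q ∩ B := fun h => hz (mem_inter.mp h).2
    have hxQB : x ∉ Q ∩ B := fun h => hx (mem_inter.mp h).2
    have hcard : T.card < Q.card := by
      have h1 : T ⊂ U := ssubset_iff_of_subset hTU |>.mpr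
        ⟨g, mem_insert_of_mem hg1, hg2⟩
      have h2 := card_lt_card h1
      rw [hQeq, card_insert_of_notMem hzQB]
      rw [hUdef, card_insert_of_notMem hxQB] at h2
      omega
    obtain ⟨y, hy1, hy2, hy3⟩ := hG.2 T hTF Q hQF hcard
    have hyz : y = z := by
      by_contra hyz
      have hyB : y ∈ Q ∩ B := by
        rcases mem_insert.mp (hQsub hy1) with h | h
        · exact absurd h hyz
        · exact mem_inter.mpr ⟨hy1, h⟩
      exact hy2 (hTmax _ hy3 (insert_subset (mem_insert_of_mem hyB) hTU)
        (mem_insert_self y _))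
    rw [hyz] at hy3
    -- insert z T ∈ F; derive insert x (insert z (Δ B)) ∈ F
    obtain ⟨hRF, hRsub, hzR, hRmin⟩ := hP _ hy3 z (mem_insert_self z _)
    set R := P (insert z T) z with hRdef
    have hDT : Δ B ⊆ T := (subset_insert _ _).trans hDxT
    have hRDz : R ⊆ insert z (Δ B) := by
      have hsf : Subfeasible F (R ∪ insert z (Δ B)) :=
        ⟨insert z T, hy3, union_subset hRsub
          (insert_subset (mem_insert_self _ _) (hDT.trans (subset_insert _ _)))⟩
      have hint : R ∩ insert z (Δ B) ∈ F := hI _ hRF _ hDz hsf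
      have := hRmin _ hint (inter_subset_left.trans hRsub)
        (mem_inter.mpr ⟨hzR, mem_insert_self _ _⟩)
      exact this.trans inter_subset_right
    have hfin : R ∪ insert x (Δ B) ∈ F := hU _ hRF _ hDx
      ⟨insert z T, hy3, union_subset hRsub
        (insert_subset (mem_insert_of_mem ((hDxT (mem_insert_self x _))))
          (hDT.trans (subset_insert _ _)))⟩
    have heq : R ∪ insert x (Δ B) = insert x (insert z (Δ B)) := by
      apply Subset.antisymm
      · exact union_subset (hRDz.trans (subset_insert _ _))
          (insert_subset_insert _ (subset_insert _ _))
      · exact insert_subset (mem_union_right _ (mem_insert_self _ _))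
          (insert_subset (mem_union_left _ hzR)
            ((subset_insert _ _).trans subset_union_right))
    exact hxz (heq ▸ hfin)
  -- conclude
  have heT : e ∈ T := hQBT (mem_inter.mpr ⟨mem_union_left _ heP2, heB⟩)
  obtain ⟨hP1F, hP1sub, heP1, hP1min⟩ := hP _ hBx e (mem_insert_of_mem heB)
  have hP1T : P (insert x B) e ⊆ T := hP1min _ hTF (hTU.trans hUsub) heT
  have hfT : f ∈ T := hP1T hfP
  rcases mem_insert.mp (hTU hfT) with h | h
  · exact absurd (h ▸ hfB) hx
  · rcases mem_union.mp (mem_inter.mp h).1 with h' | h'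
    · exact h'
    · exact absurd h' hfD


/-- In a local poset greedoid, if `B ∪ {x}, B ∪ {z} ∈ 𝓕` and
`Δ(B) ∪ {x, z} ∉ 𝓕` then the paths of elements of `B \ Δ(B)` in `B ∪ {x}` and
`B ∪ {z}` agree on `B \ Δ(B)`. -/
theorem statement17 (F : Set (Finset α)) (hG : IsGreedoid F)
    (hU : LocalUnion F) (hI : LocalInter F)
    (Δ : Finset α → Finset α)
    (hΔ : ∀ X : Finset α, Subfeasible F X →
      Δ X ∈ F ∧ Δ X ⊆ X ∧ ∀ Z ∈ F, Z ⊆ X → Z ⊆ Δ X)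
    (P : Finset α → α → Finset α)
    (hP : ∀ A ∈ F, ∀ e ∈ A, IsPathIn F A e (P A e))
    (B : Finset α) (x z : α) (hx : x ∉ B) (hz : z ∉ B)
    (hBx : insert x B ∈ F) (hBz : insert z B ∈ F)
    (hxz : insert x (insert z (Δ B)) ∉ F) :
    ∀ e ∈ B \ Δ B,
      P (insert x B) e ∩ (B \ Δ B) = P (insert z B) e ∩ (B \ Δ B) := by
  intro e he
  obtain ⟨heB, heD⟩ := mem_sdiff.mp he
  have hxz' : insert z (insert x (Δ B)) ∉ F := by
    intro h
    apply hxz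
    have : insert x (insert z (Δ B)) = insert z (insert x (Δ B)) := by
      ext a; simp only [mem_insert]; tauto
    rwa [this]
  apply Subset.antisymm
  · intro f hf
    obtain ⟨hf1, hf2⟩ := mem_inter.mp hf
    obtain ⟨hfB, hfD⟩ := mem_sdiff.mp hf2
    exact mem_inter.mpr ⟨statement17_aux F hG hU hI Δ hΔ P hP B x z hx hz hBx hBz
      hxz e heB heD f hfB hfD hf1, hf2⟩
  · intro f hf
    obtain ⟨hf1, hf2⟩ := mem_inter.mp hf
    obtain ⟨hfB, hfD⟩ := mem_sdiff.mp hf2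
    exact mem_inter.mpr ⟨statement17_aux F hG hU hI Δ hΔ P hP B z x hz hx hBz hBx
      hxz' e heB heD f hfB hfD hf1, hf2⟩
end
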